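/- arXiv:1209.5569 — 2 statements merged into one kernel-verified Lean document; each statement's English description precedes it below -/
import Mathlib

section
/- Let C be a covering of a finite nonempty set U. For every x ∈ U, N(x) is a join-irreducible element of the lattice (P, ⊆): whenever N(x) = X ∪ Y with X, Y ∈ P, then N(x) = X or N(x) = Y. -/
open Set

variable {U : Type*}

/-- The neighborhood of `x` w.r.t. the covering `C`: the intersection of all
blocks of `C` containing `x`. -/
def nbhd (C : Set (Set U)) (x : U) : Set U := ⋂₀ {K | K ∈ C ∧ x ∈ K}

/-- The sixth-type lower approximation. -/
def xL (C : Set (Set U)) (X : Set U) : Set U := {x | nbhd C x ⊆ X}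

/-- The fixed point set of neighborhoods. -/
def pFix (C : Set (Set U)) : Set (Set U) := {X | xL C X = X}

theorem mem_nbhd_self (C : Set (Set U)) (x : U) : x ∈ nbhd C x :=
  fun _ hK => hK.2

theorem nbhd_subset_of_mem_pFix {C : Set (Set U)} {X : Set U} (hX : X ∈ pFix C) {x : U}
    (hx : x ∈ X) : nbhd C x ⊆ X := by
  rw [← hX] at hx
  exact hx

theorem nbhd_eq_of_mem_pFix {C : Set (Set U)} {X : Set U} (hX : X ∈ pFix C) {x : U}
    (hx : x ∈ X) (hXN : X ⊆ nbhd C x) : nbhd C x = X :=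
  (nbhd_subset_of_mem_pFix hX hx).antisymm hXN

theorem stmt3_general (C : Set (Set U)) (x : U) :
    ∀ X ∈ pFix C, ∀ Y ∈ pFix C, nbhd C x = X ∪ Y → nbhd C x = X ∨ nbhd C x = Y := by
  intro X hX Y hY h
  rcases h ▸ mem_nbhd_self C x with hxX | hxY
  · exact Or.inl (nbhd_eq_of_mem_pFix hX hxX (h ▸ subset_union_left))
  · exact Or.inr (nbhd_eq_of_mem_pFix hY hxY (h ▸ subset_union_right))

/-- `N(x)` is a join-irreducible element of the lattice `(P, ⊆)`. -/
theorem stmt3 [Fintype U] [Nonempty U] (C : Set (Set U))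
    (hne : ∀ K ∈ C, K.Nonempty) (hcov : ⋃₀ C = Set.univ) (x : U) :
    ∀ X ∈ pFix C, ∀ Y ∈ pFix C, nbhd C x = X ∪ Y → nbhd C x = X ∨ nbhd C x = Y :=
  stmt3_general C x
end

section
/- Let C be a covering of a finite nonempty set U. For every family S of subsets with S ⊆ F, both ⋃S ∈ F and FL(⋂S) ∈ F; consequently (F, ⊆) is a complete lattice. -/
open Set

variable {U : Type*}

/-- The first-type lower approximation w.r.t. the covering `C`. -/
def fL (C : Set (Set U)) (X : Set U) : Set U := ⋃₀ {K | K ∈ C ∧ K ⊆ X}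

/-- The fixed point set of covering. -/
def fFix (C : Set (Set U)) : Set (Set U) := {X | fL C X = X}

/-- `K` is reducible in `C` if it is a union of some sets in `C \ {K}`. -/
def covReducible (C : Set (Set U)) (K : Set U) : Prop := ∃ S ⊆ C \ {K}, K = ⋃₀ S

/-- The minimal description of `x`. -/
def md (C : Set (Set U)) (x : U) : Set (Set U) :=
  {K | K ∈ C ∧ x ∈ K ∧ ∀ S ∈ C, x ∈ S → S ⊆ K → S = K}

/-- `C` is unary if `|md x| = 1` for every `x`. -/
def isUnary (C : Set (Set U)) : Prop := ∀ x : U, ∃! K : Set U, K ∈ md C x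

/-- The join-irreducible elements of the lattice `(fFix C, ⊆)`. -/
def jIrr (C : Set (Set U)) : Set (Set U) :=
  {A | A ∈ fFix C ∧ ∀ X ∈ fFix C, ∀ Y ∈ fFix C, A = X ∪ Y → A = X ∨ A = Y}

/-! `FL` is an interior operator: deflationary, monotone and idempotent. Unions of fixed points
are fixed because a monotone deflationary map fixes any union of its fixed points, and `FL(⋂S)`
is fixed by idempotence. -/

theorem fL_subset (C : Set (Set U)) (X : Set U) : fL C X ⊆ X :=
  sUnion_subset fun _ hK => hK.2

theorem fL_mono (C : Set (Set U)) {X Y : Set U} (hXY : X ⊆ Y) : fL C X ⊆ fL C Y :=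
  sUnion_mono fun _ hK => ⟨hK.1, hK.2.trans hXY⟩

theorem subset_fL_of_mem {C : Set (Set U)} {K X : Set U} (hKC : K ∈ C) (hKX : K ⊆ X) :
    K ⊆ fL C X :=
  subset_sUnion_of_mem ⟨hKC, hKX⟩

theorem fL_fL (C : Set (Set U)) (X : Set U) : fL C (fL C X) = fL C X :=
  (fL_subset C _).antisymm <| sUnion_subset fun _ hK =>
    subset_fL_of_mem hK.1 (subset_fL_of_mem hK.1 hK.2)

theorem fL_mem_fFix (C : Set (Set U)) (X : Set U) : fL C X ∈ fFix C :=
  fL_fL C X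

theorem sUnion_mem_fFix {C S : Set (Set U)} (hS : S ⊆ fFix C) : ⋃₀ S ∈ fFix C := by
  refine (fL_subset C _).antisymm (sUnion_subset fun X hX => ?_)
  calc X = fL C X := (hS hX).symm
    _ ⊆ fL C (⋃₀ S) := fL_mono C (subset_sUnion_of_mem hX)

theorem stmt13_general (C : Set (Set U))
    (S : Set (Set U)) (hS : S ⊆ fFix C) :
    ⋃₀ S ∈ fFix C ∧ fL C (⋂₀ S) ∈ fFix C :=
  ⟨sUnion_mem_fFix hS, fL_mem_fFix C _⟩

/-- for every `S ⊆ F`, both `⋃S ∈ F` and `FL(⋂S) ∈ F`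
(the empty intersection being `U`), hence `(F, ⊆)` is a complete lattice. -/
theorem stmt13 [Fintype U] [Nonempty U] (C : Set (Set U))
    (hne : ∀ K ∈ C, K.Nonempty) (hcov : ⋃₀ C = Set.univ)
    (S : Set (Set U)) (hS : S ⊆ fFix C) :
    ⋃₀ S ∈ fFix C ∧ fL C (⋂₀ S) ∈ fFix C :=
  stmt13_general C S hS
end
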